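/- Let G = (X, Y, E) be a finite bipartite permutation graph, let P be a longest path of G, and let x_{i1} y_{j1} be an edge of P. Let vw ∈ E with v = x_{i2} ∈ X and w = y_{j2} ∈ Y, and suppose the edges x_{i1} y_{j1} and x_{i2} y_{j2} cross each other, i.e., (i1 − i2)(j1 − j2) < 0. Then P contains v or w. -/

import Mathlib

open SimpleGraph

/-- `p` is a longest path of `G`: it is a path, and no path of `G` is longer. -/
def IsLongestPath {V : Type*} (G : SimpleGraph V) {u v : V} (p : G.Walk u v) : Prop :=
  p.IsPath ∧ ∀ ⦃a b : V⦄ (q : G.Walk a b), q.IsPath → q.length ≤ p.length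

/-- A line representation of a bipartite graph `G` on `Fin n ⊕ Fin m` (left part
`X = {x_1 < ⋯ < x_n}`, right part `Y = {y_1 < ⋯ < y_m}`), witnessing that `G` is a
bipartite permutation graph: points `r i` (for `x i`) and `s j` (for `y j`) on a first
line, and points `σr i`, `σs j` on a second line, strictly increasing on each part and
pairwise distinct across parts, such that `x i` and `y j` are adjacent iff the
corresponding segments cross, i.e. `(r i - s j) * (σr i - σs j) < 0`; there are no edges
within `X` nor within `Y`. -/
structure LineRep (n m : ℕ) (G : SimpleGraph (Fin n ⊕ Fin m)) where
  r : Fin n → ℝ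
  s : Fin m → ℝ
  σr : Fin n → ℝ
  σs : Fin m → ℝ
  r_mono : StrictMono r
  s_mono : StrictMono s
  σr_mono : StrictMono σr
  σs_mono : StrictMono σs
  top_distinct : ∀ i j, r i ≠ s j
  bot_distinct : ∀ i j, σr i ≠ σs j
  adj_iff : ∀ i j, G.Adj (Sum.inl i) (Sum.inr j) ↔ (r i - s j) * (σr i - σs j) < 0
  no_left : ∀ i i', ¬ G.Adj (Sum.inl i) (Sum.inl i')
  no_right : ∀ j j', ¬ G.Adj (Sum.inr j) (Sum.inr j')

/-- A path in a bipartite graph on `Fin n ⊕ Fin m` is ordered if its vertices alternate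
between the two parts and, within each part, appear in strictly increasing index order.
-/
def OrderedWalk {n m : ℕ} (G : SimpleGraph (Fin n ⊕ Fin m)) {u v : Fin n ⊕ Fin m}
    (p : G.Walk u v) : Prop :=
  List.Chain' (fun a b : Fin n ⊕ Fin m => a.isLeft ≠ b.isLeft) p.support ∧
  (p.support.filterMap Sum.getLeft?).Pairwise (· < ·) ∧
  (p.support.filterMap Sum.getRight?).Pairwise (· < ·)


/-!
Crossing edges `x_{i1} y_{j1}` and `x_{i2} y_{j2}` of a bipartite permutation graph span a
4-cycle: since the points of each part are increasing on both lines, `x_{i1} y_{j2}` and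
`x_{i2} y_{j1}` are edges too. If a longest path `P` avoided `x_{i2}` and `y_{j2}`, replacing
its edge `x_{i1} y_{j1}` by the detour `x_{i1} y_{j2} x_{i2} y_{j1}` would give a path two edges
longer.
-/

section Crossing

variable {R : Type*} [Ring R] [LinearOrder R] [IsStrictOrderedRing R]

/-- Read `(r, t)` as the segment from `r` on one line to `t` on a parallel line, so that
`(r - s) * (t - w) < 0` says that the segments `(r, t)` and `(s, w)` cross. -/
theorem sub_mul_sub_neg_of_crossing {r₁ r₂ s₁ s₂ t₁ t₂ w₁ w₂ : R}
    (hr : r₁ < r₂) (hs : s₂ < s₁) (ht : t₁ < t₂) (hw : w₂ < w₁)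
    (h₁ : (r₁ - s₁) * (t₁ - w₁) < 0) (h₂ : (r₂ - s₂) * (t₂ - w₂) < 0) (hrs : r₁ ≠ s₂) :
    (r₁ - s₂) * (t₁ - w₂) < 0 := by
  rcases hrs.lt_or_gt with hlt | hgt
  · have : w₁ < t₁ := sub_pos.1 (pos_of_mul_neg_right h₁ (sub_neg.2 (hlt.trans hs)).le)
    exact mul_neg_of_neg_of_pos (sub_neg.2 hlt) (sub_pos.2 (hw.trans this))
  · have : t₂ < w₂ := sub_neg.1 (neg_of_mul_neg_right h₂ (sub_pos.2 (hgt.trans hr)).le)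
    exact mul_neg_of_pos_of_neg (sub_pos.2 hgt) (sub_neg.2 (ht.trans this))

end Crossing

namespace LineRep

variable {n m : ℕ} {G : SimpleGraph (Fin n ⊕ Fin m)} {i₁ i₂ : Fin n} {j₁ j₂ : Fin m}

theorem adj_of_lt_of_lt (rep : LineRep n m G) (hi : i₁ < i₂) (hj : j₂ < j₁)
    (h₁ : G.Adj (.inl i₁) (.inr j₁)) (h₂ : G.Adj (.inl i₂) (.inr j₂)) :
    G.Adj (.inl i₁) (.inr j₂) ∧ G.Adj (.inl i₂) (.inr j₁) := by
  simp only [rep.adj_iff] at h₁ h₂ ⊢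
  refine ⟨sub_mul_sub_neg_of_crossing (rep.r_mono hi) (rep.s_mono hj) (rep.σr_mono hi)
    (rep.σs_mono hj) h₁ h₂ (rep.top_distinct _ _), ?_⟩
  -- Reflecting both lines exchanges the roles of the two pairs.
  have := sub_mul_sub_neg_of_crossing (neg_lt_neg (rep.r_mono hi)) (neg_lt_neg (rep.s_mono hj))
    (neg_lt_neg (rep.σr_mono hi)) (neg_lt_neg (rep.σs_mono hj)) (by linarith) (by linarith)
    (neg_injective.ne (rep.top_distinct i₂ j₁))
  linarith

theorem adj_of_cross (rep : LineRep n m G) (h₁ : G.Adj (.inl i₁) (.inr j₁))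
    (h₂ : G.Adj (.inl i₂) (.inr j₂))
    (hcross : (((i₁ : ℕ) : ℤ) - ((i₂ : ℕ) : ℤ)) * (((j₁ : ℕ) : ℤ) - ((j₂ : ℕ) : ℤ)) < 0) :
    G.Adj (.inl i₁) (.inr j₂) ∧ G.Adj (.inl i₂) (.inr j₁) := by
  rcases mul_neg_iff.1 hcross with ⟨hi, hj⟩ | ⟨hi, hj⟩
  · exact (rep.adj_of_lt_of_lt (by omega) (by omega) h₂ h₁).symm
  · exact rep.adj_of_lt_of_lt (by omega) (by omega) h₁ h₂

end LineRep

namespace SimpleGraph.Walk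

variable {V : Type*} {G : SimpleGraph V}

theorem IsPath.append {u v w : V} {p : G.Walk u v} {q : G.Walk v w} (hp : p.IsPath)
    (hq : q.IsPath) (hpq : ∀ x ∈ p.support, x ∈ q.support → x = v) : (p.append q).IsPath := by
  rw [isPath_def, support_append, List.nodup_append]
  refine ⟨hp.support_nodup, hq.support_nodup.tail, fun x hxp y hyq hxy => ?_⟩
  subst hxy
  obtain rfl := hpq x hxp (List.mem_of_mem_tail hyq)
  have hq' := hq.support_nodup
  rw [← q.cons_tail_support] at hq'
  exact (List.nodup_cons.1 hq').1 hyq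

theorem IsPath.exists_replace_edge {u v a b : V} {p : G.Walk u v} (hp : p.IsPath)
    (he : s(a, b) ∈ p.edges) {q : G.Walk a b} (hq : q.IsPath)
    (hpq : ∀ x ∈ q.support, x ∈ p.support → x = a ∨ x = b) :
    ∃ r : G.Walk u v, r.IsPath ∧ r.length + 1 = p.length + q.length ∧
      r.support ⊆ p.support ++ q.support := by
  induction p with
  | nil => simp at he
  | @cons u c v h p ih =>
    have hu : u ∉ p.support := ((cons_isPath_iff h p).1 hp).2
    rcases List.mem_cons.1 (edges_cons h p ▸ he) with he | he
    · obtain ⟨q', hq', hlen, hsupp, hpq'⟩ : ∃ q' : G.Walk u c, q'.IsPath ∧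
          q'.length = q.length ∧ q'.support ⊆ q.support ∧
          ∀ x ∈ q'.support, x ∈ (cons h p).support → x = u ∨ x = c := by
        rcases Sym2.eq_iff.1 he with ⟨rfl, rfl⟩ | ⟨rfl, rfl⟩
        · exact ⟨q, hq, rfl, List.Subset.refl _, hpq⟩
        · refine ⟨q.reverse, hq.reverse, q.length_reverse, by simp, fun x hxq hxp => ?_⟩
          exact (hpq x (by simpa using hxq) hxp).symm
      refine ⟨q'.append p, hq'.append hp.of_cons fun x hxq hxp => ?_, ?_, ?_⟩
      · exact (hpq' x hxq (List.mem_cons_of_mem _ hxp)).resolve_left (by rintro rfl; exact hu hxp)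
      · simp only [length_append, length_cons, hlen]; omega
      · intro x hx
        simp only [support_append, List.mem_append, support_cons, List.mem_cons] at hx ⊢
        rcases hx with hx | hx
        · exact .inr (hsupp hx)
        · exact .inl (.inr (List.mem_of_mem_tail hx))
    · obtain ⟨r, hr, hlen, hsupp⟩ := ih hp.of_cons he fun x hxq hxp =>
        hpq x hxq (List.mem_cons_of_mem _ hxp)
      have hur : u ∉ r.support := fun hur => by
        rcases List.mem_append.1 (hsupp hur) with hup | huq
        · exact hu hup
        · rcases hpq u huq (start_mem_support _) with rfl | rfl
          · exact hu (p.fst_mem_support_of_mem_edges he)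
          · exact hu (p.snd_mem_support_of_mem_edges he)
      refine ⟨cons h r, (cons_isPath_iff h r).2 ⟨hr, hur⟩, by simp; omega, ?_⟩
      intro x hx
      simp only [support_cons, List.mem_cons, List.cons_append, List.mem_append] at hx ⊢
      rcases hx with rfl | hx
      · exact .inl rfl
      · exact .inr (List.mem_append.1 (hsupp hx))

end SimpleGraph.Walk

theorem IsLongestPath.exists_mem_support_of_detour {V : Type*} {G : SimpleGraph V}
    {u v a b : V} {P : G.Walk u v} (hP : IsLongestPath G P) (he : s(a, b) ∈ P.edges)
    {q : G.Walk a b} (hq : q.IsPath) (hlen : 2 ≤ q.length) :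
    ∃ x ∈ q.support, x ∈ P.support ∧ x ≠ a ∧ x ≠ b := by
  by_contra! h
  obtain ⟨r, hr, hrlen, -⟩ := hP.1.exists_replace_edge he hq fun x hxq hxP =>
    or_iff_not_imp_left.2 (h x hxq hxP)
  have := hP.2 r hr
  omega

/-- In a finite bipartite permutation graph, if a longest path `P` uses the edge
`x_{i1} y_{j1}` and the edge `x_{i2} y_{j2}` of `G` crosses it
(i.e. `(i1 - i2) * (j1 - j2) < 0`), then `P` contains `x_{i2}` or `y_{j2}`. -/
theorem longest_path_meets_crossing_edge {n m : ℕ} (G : SimpleGraph (Fin n ⊕ Fin m))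
    (rep : LineRep n m G) ⦃u v : Fin n ⊕ Fin m⦄ (P : G.Walk u v)
    (hP : IsLongestPath G P) {i1 i2 : Fin n} {j1 j2 : Fin m}
    (he : s(Sum.inl i1, Sum.inr j1) ∈ P.edges)
    (hvw : G.Adj (Sum.inl i2) (Sum.inr j2))
    (hcross : (((i1 : ℕ) : ℤ) - ((i2 : ℕ) : ℤ)) * (((j1 : ℕ) : ℤ) - ((j2 : ℕ) : ℤ)) < 0) :
    Sum.inl i2 ∈ P.support ∨ Sum.inr j2 ∈ P.support := by
  obtain ⟨h₁₂, h₂₁⟩ := rep.adj_of_cross (P.adj_of_mem_edges he) hvw hcross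
  have hi : i1 ≠ i2 := by rintro rfl; simp at hcross
  have hj : j1 ≠ j2 := by rintro rfl; simp at hcross
  let detour : G.Walk (.inl i1) (.inr j1) := .cons h₁₂ (.cons hvw.symm (.cons h₂₁ .nil))
  have hdetour : detour.IsPath := by simp [detour, hi, hj.symm]
  obtain ⟨x, hx, hxP, hx₁, hx₂⟩ := hP.exists_mem_support_of_detour he hdetour (by simp [detour])
  simp only [detour, Walk.support_cons, Walk.support_nil, List.mem_cons, List.not_mem_nil,
    or_false] at hx
  rcases hx with rfl | rfl | rfl | rfl
  exacts [absurd rfl hx₁, .inr hxP, .inl hxP, absurd rfl hx₂]
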